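/- Fix β ∈ ℝ, n ∈ ℤ, V continuous on [0,R]. For every K > 0 there exists v ∈ H with ‖v‖_H^2 > K and I_β(v) < 0, where I_β(u) = (1/2)∫_0^R { r u_r^2 + (n^2/r) u^2 + (β − V) r u^2 − (r/2) u^4 } dr. In fact the tent functions u_0(r) = (b/a) min(r, 2a−r) with R = 2a satisfy ‖u_0‖_H^2 = 4 b^2 ln 2 and I_β(u_0) ≤ b^2 (1 + n^2(2 ln 2 − 1) + (a^2/3)(β + V_0^-) − a^2 b^2/10), which tends to −∞ as b → ∞. -/

import Mathlib

/-!
The tent `u(r) = (b/a) min(r, 2a - r)` is piecewise linear with `|u'| = b/a`, so after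
splitting `(0, 2a)` at `a` every term of `‖u‖_H²` and of `I_β(u)` is an elementary integral;
`∫ 1/r` is the source of `log 2`. Only the potential has to be estimated, by `-V ≤ V₀⁻`.
The result is quadratic in `b` except for the quartic term `-a²b⁴/10`, so for large `b` the
norm exceeds any `K` while the action is negative.
-/

open MeasureTheory Set

/-- The action functional `I_β`. -/
noncomputable def actionIbeta (R : ℝ) (n : ℤ) (V : ℝ → ℝ) (β : ℝ) (u u' : ℝ → ℝ) : ℝ :=
  (1/2) * ∫ r in Ioo (0:ℝ) R,
    (r * u' r ^ 2 + ((n:ℝ)^2 / r) * u r ^ 2 + (β - V r) * r * u r ^ 2 - r / 2 * u r ^ 4)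

open Filter

section Piecewise

variable {f g₁ g₂ : ℝ → ℝ} {a b c : ℝ}

theorem integrableOn_Ioc_of_eqOn_of_eqOn (hab : a ≤ b) (hbc : b ≤ c)
    (h₁ : EqOn f g₁ (Ioc a b)) (h₂ : EqOn f g₂ (Ioc b c))
    (hg₁ : IntervalIntegrable g₁ volume a b) (hg₂ : IntervalIntegrable g₂ volume b c) :
    IntegrableOn f (Ioc a c) := by
  rw [← Ioc_union_Ioc_eq_Ioc hab hbc]
  exact (((intervalIntegrable_iff_integrableOn_Ioc_of_le hab).1 hg₁).congr_fun h₁.symm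
    measurableSet_Ioc).union
    (((intervalIntegrable_iff_integrableOn_Ioc_of_le hbc).1 hg₂).congr_fun h₂.symm
      measurableSet_Ioc)

theorem setIntegral_Ioo_eq_add_of_eqOn_of_eqOn (hab : a ≤ b) (hbc : b ≤ c)
    (h₁ : EqOn f g₁ (Ioc a b)) (h₂ : EqOn f g₂ (Ioc b c))
    (hg₁ : IntervalIntegrable g₁ volume a b) (hg₂ : IntervalIntegrable g₂ volume b c) :
    ∫ x in Ioo a c, f x = (∫ x in a..b, g₁ x) + ∫ x in b..c, g₂ x := by
  have hf := integrableOn_Ioc_of_eqOn_of_eqOn hab hbc h₁ h₂ hg₁ hg₂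
  rw [← integral_Ioc_eq_integral_Ioo, ← Ioc_union_Ioc_eq_Ioc hab hbc,
    setIntegral_union (Ioc_disjoint_Ioc_of_le le_rfl) measurableSet_Ioc
      (hf.mono_set (Ioc_subset_Ioc_right hbc)) (hf.mono_set (Ioc_subset_Ioc_left hab)),
    intervalIntegral.integral_of_le hab, intervalIntegral.integral_of_le hbc,
    setIntegral_congr_fun measurableSet_Ioc h₁, setIntegral_congr_fun measurableSet_Ioc h₂]

end Piecewise

theorem intervalIntegrable_inv_of_pos {a b : ℝ} (ha : 0 < a) (hb : 0 < b) :
    IntervalIntegrable (fun r : ℝ => r⁻¹) volume a b :=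
  intervalIntegrable_inv_iff.2 <| Or.inr fun h => by
    rcases le_total a b with hab | hba
    · rw [uIcc_of_le hab] at h; linarith [h.1]
    · rw [uIcc_of_ge hba] at h; linarith [h.1]

section Tent

variable {a : ℝ}

theorem hasDerivAt_tent {x : ℝ} (c : ℝ) (hx : x ≠ a) :
    HasDerivAt (fun r => c * min r (2 * a - r)) (if x < a then c else -c) x := by
  rcases hx.lt_or_gt with hxa | hxa
  · rw [if_pos hxa]
    refine ((hasDerivAt_id x).const_mul c).congr_of_eventuallyEq ?_ |>.congr_deriv (mul_one c)
    filter_upwards [Iio_mem_nhds hxa] with r hr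
    rw [min_eq_left (by linarith [mem_Iio.1 hr])]
    rfl
  · rw [if_neg hxa.not_gt]
    refine (((hasDerivAt_id x).const_sub (2 * a)).const_mul c).congr_of_eventuallyEq ?_
      |>.congr_deriv (by ring)
    filter_upwards [Ioi_mem_nhds hxa] with r hr
    rw [min_eq_right (by linarith [mem_Ioi.1 hr])]
    rfl

theorem integral_mul_tent_pow (ha : 0 ≤ a) (k : ℕ) :
    ∫ r in Ioo 0 (2 * a), r * min r (2 * a - r) ^ k = 2 * a ^ (k + 2) / (k + 1) := by
  rw [setIntegral_Ioo_eq_add_of_eqOn_of_eqOn (g₁ := fun r => r * r ^ k)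
      (g₂ := fun r => r * (2 * a - r) ^ k) ha (by linarith)
      (fun r hr => by simp only [min_eq_left (by linarith [hr.2] : r ≤ 2 * a - r)])
      (fun r hr => by simp only [min_eq_right (by linarith [hr.1] : 2 * a - r ≤ r)])
      (Continuous.intervalIntegrable (by fun_prop) _ _)
      (Continuous.intervalIntegrable (by fun_prop) _ _)]
  -- reflecting the right half onto `[0, a]` turns the weight `r` into `2a - r`, so the two
  -- halves add up to `∫₀ᵃ 2a s^k`
  have hreflect : ∫ r in a..2 * a, r * (2 * a - r) ^ k = ∫ s in 0..a, (2 * a - s) * s ^ k := by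
    simpa [two_mul] using
      intervalIntegral.integral_comp_sub_left (fun s => (2 * a - s) * s ^ k) (a := a) (b := 2 * a)
        (2 * a)
  rw [hreflect, ← intervalIntegral.integral_add (Continuous.intervalIntegrable (by fun_prop) _ _)
    (Continuous.intervalIntegrable (by fun_prop) _ _)]
  simp only [← add_mul, add_sub_cancel, intervalIntegral.integral_const_mul, integral_pow]
  ring

theorem tent_sq_div_eqOn_left :
    EqOn (fun r => min r (2 * a - r) ^ 2 / r) (fun r => r) (Ioc 0 a) := fun r hr => by
  simp only [min_eq_left (by linarith [hr.2] : r ≤ 2 * a - r)]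
  field_simp [hr.1.ne']

theorem tent_sq_div_eqOn_right :
    EqOn (fun r => min r (2 * a - r) ^ 2 / r) (fun r => 4 * a ^ 2 * r⁻¹ - 4 * a + r)
      (Ioc a (2 * a)) := fun r hr => by
  have hr0 : r ≠ 0 := by linarith [hr.1, hr.2]
  simp only [min_eq_right (by linarith [hr.1] : 2 * a - r ≤ r)]
  field_simp
  ring

theorem integrableOn_tent_sq_div (ha : 0 < a) :
    IntegrableOn (fun r => min r (2 * a - r) ^ 2 / r) (Ioo 0 (2 * a)) :=
  (integrableOn_Ioc_of_eqOn_of_eqOn ha.le (by linarith) tent_sq_div_eqOn_left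
    tent_sq_div_eqOn_right intervalIntegral.intervalIntegrable_id
    (((intervalIntegrable_inv_of_pos ha (by linarith)).const_mul _).sub
      intervalIntegrable_const |>.add intervalIntegral.intervalIntegrable_id)).mono_set
    Ioo_subset_Ioc_self

theorem integral_tent_sq_div (ha : 0 < a) :
    ∫ r in Ioo 0 (2 * a), min r (2 * a - r) ^ 2 / r = a ^ 2 * (4 * Real.log 2 - 2) := by
  have hinv := intervalIntegrable_inv_of_pos ha (by linarith : 0 < 2 * a)
  rw [setIntegral_Ioo_eq_add_of_eqOn_of_eqOn ha.le (by linarith) tent_sq_div_eqOn_left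
      tent_sq_div_eqOn_right intervalIntegral.intervalIntegrable_id
      (((hinv.const_mul _).sub intervalIntegrable_const).add
        intervalIntegral.intervalIntegrable_id),
    intervalIntegral.integral_add ((hinv.const_mul _).sub intervalIntegrable_const)
      intervalIntegral.intervalIntegrable_id,
    intervalIntegral.integral_sub (hinv.const_mul _) intervalIntegrable_const,
    intervalIntegral.integral_const_mul, integral_inv_of_pos ha (by linarith), integral_id,
    integral_id, intervalIntegral.integral_const, mul_div_cancel_right₀ _ ha.ne', smul_eq_mul]
  ring

theorem integrableOn_mul_tent_pow (k : ℕ) :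
    IntegrableOn (fun r => r * min r (2 * a - r) ^ k) (Ioo 0 (2 * a)) :=
  (Continuous.integrableOn_Icc (by fun_prop)).mono_set Ioo_subset_Icc_self

theorem integrableOn_tent_combination (ha : 0 < a) (A B C D : ℝ) :
    IntegrableOn (fun r => A * r + B * (min r (2 * a - r) ^ 2 / r)
      + C * (r * min r (2 * a - r) ^ 2) - D * (r * min r (2 * a - r) ^ 4)) (Ioo 0 (2 * a)) :=
  ((((continuous_const_mul A).integrableOn_Icc).mono_set Ioo_subset_Icc_self).add
    ((integrableOn_tent_sq_div ha).const_mul B) |>.add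
    ((integrableOn_mul_tent_pow 2).const_mul C)).sub ((integrableOn_mul_tent_pow 4).const_mul D)

theorem integral_tent_combination (ha : 0 < a) (A B C D : ℝ) :
    ∫ r in Ioo 0 (2 * a), (A * r + B * (min r (2 * a - r) ^ 2 / r)
      + C * (r * min r (2 * a - r) ^ 2) - D * (r * min r (2 * a - r) ^ 4)) =
      A * (2 * a ^ 2) + B * (a ^ 2 * (4 * Real.log 2 - 2)) + C * (2 * a ^ 4 / 3)
        - D * (2 * a ^ 6 / 5) := by
  have hr := integral_mul_tent_pow ha.le 0
  norm_num at hr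
  have hAr : IntegrableOn (fun r : ℝ => A * r) (Ioo 0 (2 * a)) :=
    (continuous_const_mul A).integrableOn_Icc.mono_set Ioo_subset_Icc_self
  have hBq := (integrableOn_tent_sq_div ha).const_mul B
  have hCp := (integrableOn_mul_tent_pow (a := a) 2).const_mul C
  rw [integral_sub, integral_add, integral_add, integral_const_mul, integral_const_mul,
    integral_const_mul, integral_const_mul, hr, integral_tent_sq_div ha,
    integral_mul_tent_pow ha.le, integral_mul_tent_pow ha.le]
  · norm_num
  exacts [hAr, hBq, hAr.add hBq, hCp, (hAr.add hBq).add hCp,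
    (integrableOn_mul_tent_pow 4).const_mul D]

theorem integral_tent_normSq (ha : 0 < a) (b : ℝ) :
    ∫ r in Ioo 0 (2 * a), (r * (if r < a then b / a else -(b / a)) ^ 2
      + ((b / a) * min r (2 * a - r)) ^ 2 / r) = 4 * b ^ 2 * Real.log 2 := by
  convert integral_tent_combination ha ((b / a) ^ 2) ((b / a) ^ 2) 0 0 using 1
  · simp only [ite_pow, neg_sq, ite_self]
    congr 1 with r
    ring
  · field_simp
    ring

theorem actionIbeta_tent_le (ha : 0 < a) (n : ℤ) (V : ℝ → ℝ)
    (hV : ContinuousOn V (Icc 0 (2 * a))) (β Vm : ℝ) (hVm : ∀ r ∈ Icc 0 (2 * a), -V r ≤ Vm)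
    (b : ℝ) :
    actionIbeta (2 * a) n V β (fun r => (b / a) * min r (2 * a - r))
        (fun r => if r < a then b / a else -(b / a)) ≤
      b ^ 2 * (1 + (n : ℝ) ^ 2 * (2 * Real.log 2 - 1) + a ^ 2 / 3 * (β + Vm)
        - a ^ 2 * b ^ 2 / 10) := by
  set c := b / a
  -- replacing `-V` by its maximum `Vm` leaves a tent combination, minus a nonnegative remainder
  have hF : actionIbeta (2 * a) n V β (fun r => c * min r (2 * a - r))
        (fun r => if r < a then c else -c) =
      1 / 2 * ∫ r in Ioo 0 (2 * a), ((c ^ 2 * r + (n ^ 2 * c ^ 2) * (min r (2 * a - r) ^ 2 / r)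
        + (c ^ 2 * (β + Vm)) * (r * min r (2 * a - r) ^ 2)
        - c ^ 4 / 2 * (r * min r (2 * a - r) ^ 4))
        - c ^ 2 * ((Vm + V r) * (r * min r (2 * a - r) ^ 2))) := by
    simp only [actionIbeta, ite_pow, neg_sq, ite_self]
    congr 2 with r
    ring
  have hrem : IntegrableOn (fun r => c ^ 2 * ((Vm + V r) * (r * min r (2 * a - r) ^ 2)))
      (Ioo 0 (2 * a)) :=
    (ContinuousOn.integrableOn_Icc (by fun_prop)).mono_set Ioo_subset_Icc_self
  have hrem_nonneg :
      0 ≤ ∫ r in Ioo 0 (2 * a), c ^ 2 * ((Vm + V r) * (r * min r (2 * a - r) ^ 2)) :=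
    setIntegral_nonneg measurableSet_Ioo fun r hr => by
      have hVr : 0 ≤ Vm + V r := by linarith [hVm r (Ioo_subset_Icc_self hr)]
      have hr0 := hr.1.le
      positivity
  rw [hF, integral_sub (integrableOn_tent_combination ha _ _ _ _) hrem,
    integral_tent_combination ha]
  have hval : 1 / 2 * (c ^ 2 * (2 * a ^ 2) + n ^ 2 * c ^ 2 * (a ^ 2 * (4 * Real.log 2 - 2))
        + c ^ 2 * (β + Vm) * (2 * a ^ 4 / 3) - c ^ 4 / 2 * (2 * a ^ 6 / 5)) =
      b ^ 2 * (1 + (n : ℝ) ^ 2 * (2 * Real.log 2 - 1) + a ^ 2 / 3 * (β + Vm)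
        - a ^ 2 * b ^ 2 / 10) := by
    simp only [c]; field_simp; ring
  linarith

end Tent

/-- for every `K > 0` there is `v ∈ H` with `‖v‖_H² > K` and `I_β(v) < 0`;
in fact the tent functions `u₀(r) = (b/a)min(r, 2a−r)` (with `R = 2a`) satisfy
`‖u₀‖_H² = 4b² ln 2` and
`I_β(u₀) ≤ b²(1 + n²(2 ln 2 − 1) + (a²/3)(β + V₀⁻) − a²b²/10)`, which `→ −∞` as `b → ∞`. -/
theorem stmt14 (a : ℝ) (ha : 0 < a) (R : ℝ) (hRa : R = 2 * a) (n : ℤ)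
    (V : ℝ → ℝ) (hV : ContinuousOn V (Icc 0 R)) (β : ℝ) (Vm : ℝ)
    (hVm : IsGreatest ((fun r => max (-V r) 0) '' Icc (0:ℝ) R) Vm) :
    (∀ K > (0:ℝ), ∃ v v' : ℝ → ℝ,
      (∀ x ∈ Ioo (0:ℝ) R, x ≠ a → HasDerivAt v (v' x) x) ∧ v 0 = 0 ∧ v R = 0 ∧
      K < ∫ r in Ioo (0:ℝ) R, (r * v' r ^ 2 + v r ^ 2 / r) ∧
      actionIbeta R n V β v v' < 0) ∧
    ∀ b > (0:ℝ), ∀ u0 u0' : ℝ → ℝ,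
      u0 = (fun r => (b / a) * min r (2 * a - r)) →
      u0' = (fun r => if r < a then b / a else -(b / a)) →
      (∫ r in Ioo (0:ℝ) R, (r * u0' r ^ 2 + u0 r ^ 2 / r)) = 4 * b ^ 2 * Real.log 2 ∧
      actionIbeta R n V β u0 u0' ≤
        b ^ 2 * (1 + (n:ℝ)^2 * (2 * Real.log 2 - 1) + a ^ 2 / 3 * (β + Vm)
          - a ^ 2 * b ^ 2 / 10) := by
  subst hRa
  have hVm_bound : ∀ r ∈ Icc 0 (2 * a), -V r ≤ Vm := fun r hr =>
    (le_max_left _ _).trans (hVm.2 ⟨r, hr, rfl⟩)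
  refine ⟨fun K _ => ?_, ?_⟩
  · have hsq := tendsto_pow_atTop (α := ℝ) two_ne_zero
    obtain ⟨b, hb0, hbK, hbC⟩ := (eventually_gt_atTop 0 |>.and <|
      (hsq.eventually_gt_atTop (K / (4 * Real.log 2))).and
        (hsq.eventually_gt_atTop
          (10 * (1 + (n:ℝ)^2 * (2 * Real.log 2 - 1) + a ^ 2 / 3 * (β + Vm)) / a ^ 2))).exists
    rw [div_lt_iff₀ (by positivity)] at hbK hbC
    refine ⟨fun r => (b / a) * min r (2 * a - r), fun r => if r < a then b / a else -(b / a),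
      fun x _ hx => hasDerivAt_tent _ hx, by simp [ha.le], by simp [ha.le], ?_, ?_⟩
    · rw [integral_tent_normSq ha b]
      linarith
    · exact (actionIbeta_tent_le ha n V hV β Vm hVm_bound b).trans_lt
        (mul_neg_of_pos_of_neg (by positivity) (by linarith))
  · rintro b - _ _ rfl rfl
    exact ⟨integral_tent_normSq ha b, actionIbeta_tent_le ha n V hV β Vm hVm_bound b⟩
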